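/- Let n₁, …, n_C be positive integers with N = n₁ + ⋯ + n_C and 𝒩 = {n₁, …, n_C}. Let D ∈ ℝ^{d×N}, let M be a positive integer, and suppose there exists δ ∈ [0,1) such that (1−δ)·‖v‖₂² ≤ ‖D·v‖₂² ≤ (1+δ)·‖v‖₂² for every block 2M-sparse vector v ∈ ℝ^N over 𝒩. If x₀ ∈ ℝ^N is block M-sparse over 𝒩 and y = D·x₀, then x₀ is the unique minimizer of ‖x‖_{0,𝒩} subject to y = D·x. -/
import Mathlib


/-- Block sparsity `‖x‖_{0,𝒩}` of a vector `x ∈ ℝ^N` indexed blockwise over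
`𝒩 = {n₁,…,n_C}`: the number of blocks `k` with `x_k ≠ 0`. -/
noncomputable def blockSparsity {C : ℕ} {nk : Fin C → ℕ}
    (x : ((k : Fin C) × Fin (nk k)) → ℝ) : ℕ :=
  Nat.card {k : Fin C // (fun i : Fin (nk k) => x ⟨k, i⟩) ≠ 0}

lemma blockSparsity_eq_ncard {C : ℕ} {nk : Fin C → ℕ}
    (x : ((k : Fin C) × Fin (nk k)) → ℝ) :
    blockSparsity x = Set.ncard {k : Fin C | (fun i : Fin (nk k) => x ⟨k, i⟩) ≠ 0} := by
  rw [blockSparsity, ← Nat.card_coe_set_eq]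
  rfl

lemma blockSparsity_sub_le {C : ℕ} {nk : Fin C → ℕ}
    (x y : ((k : Fin C) × Fin (nk k)) → ℝ) :
    blockSparsity (x - y) ≤ blockSparsity x + blockSparsity y := by
  rw [blockSparsity_eq_ncard, blockSparsity_eq_ncard, blockSparsity_eq_ncard]
  refine le_trans (Set.ncard_le_ncard ?_ (Set.toFinite _)) (Set.ncard_union_le _ _)
  intro k hk
  by_contra h
  simp only [Set.mem_union, Set.mem_setOf_eq, not_or, not_not] at h
  apply hk
  funext i
  have h1 := congrFun h.1 i
  have h2 := congrFun h.2 i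
  simp only [Pi.zero_apply] at h1 h2
  simp [h1, h2]

/-- If `D` satisfies the block RIP of order `2M` over `𝒩` with constant `δ < 1`,
and `x₀` is block `M`-sparse with `y = D·x₀`, then `x₀` is the unique minimizer
of `‖x‖_{0,𝒩}` subject to `y = D·x`. -/
theorem block_rip_unique_minimizer
    (d C M : ℕ) (nk : Fin C → ℕ) (hnk : ∀ k, 0 < nk k) (hM : 0 < M)
    (D : Matrix (Fin d) ((k : Fin C) × Fin (nk k)) ℝ)
    (δ : ℝ) (hδ0 : 0 ≤ δ) (hδ1 : δ < 1)
    (hRIP : ∀ v : ((k : Fin C) × Fin (nk k)) → ℝ, blockSparsity v ≤ 2 * M →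
      (1 - δ) * ∑ i, v i ^ 2 ≤ ∑ j, (D.mulVec v j) ^ 2 ∧
        ∑ j, (D.mulVec v j) ^ 2 ≤ (1 + δ) * ∑ i, v i ^ 2)
    (x₀ : ((k : Fin C) × Fin (nk k)) → ℝ) (hx₀ : blockSparsity x₀ ≤ M)
    (y : Fin d → ℝ) (hy : y = D.mulVec x₀) :
    (∀ x : ((k : Fin C) × Fin (nk k)) → ℝ, y = D.mulVec x →
        blockSparsity x₀ ≤ blockSparsity x) ∧
      (∀ x : ((k : Fin C) × Fin (nk k)) → ℝ, y = D.mulVec x →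
        blockSparsity x ≤ blockSparsity x₀ → x = x₀) := by
  have key : ∀ x : ((k : Fin C) × Fin (nk k)) → ℝ, y = D.mulVec x →
      blockSparsity x ≤ M → x = x₀ := by
    intro x hx hxs
    set v := x - x₀ with hv
    have hsp : blockSparsity v ≤ 2 * M := by
      calc blockSparsity v ≤ blockSparsity x + blockSparsity x₀ :=
            blockSparsity_sub_le x x₀
        _ ≤ M + M := Nat.add_le_add hxs hx₀
        _ = 2 * M := (two_mul M).symm
    have hDv : D.mulVec v = 0 := by
      rw [hv, Matrix.mulVec_sub, ← hx, ← hy, sub_self]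
    have h := (hRIP v hsp).1
    rw [hDv] at h
    simp only [Pi.zero_apply, ne_eq, zero_pow, Finset.sum_const_zero] at h
    have h' : (1 - δ) * ∑ i, v i ^ 2 ≤ 0 := by simpa using h
    have hsum : ∑ i, v i ^ 2 ≤ 0 := by nlinarith [h']
    have hz : ∀ i, v i = 0 := by
      intro i
      have hle : ∀ i ∈ Finset.univ, (0:ℝ) ≤ v i ^ 2 := fun i _ => sq_nonneg _
      have := (Finset.sum_eq_zero_iff_of_nonneg hle).mp
        (le_antisymm hsum (Finset.sum_nonneg hle))
      exact pow_eq_zero_iff two_ne_zero |>.mp (by simpa using this i (Finset.mem_univ i))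
    have : v = 0 := funext hz
    have := sub_eq_zero.mp (by rw [← hv]; exact this)
    exact this
  constructor
  · intro x hx
    by_contra h
    push_neg at h
    have hxs : blockSparsity x ≤ M := le_trans (le_of_lt h) hx₀
    exact absurd (key x hx hxs ▸ h) (lt_irrefl _)
  · intro x hx hle
    exact key x hx (le_trans hle hx₀)
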